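/- arXiv:2101.02615 — 3 statements merged into one kernel-verified Lean document; each statement's English description precedes it below -/
import Mathlib

section
/- For 0 < p < 1 and integer m ≥ 1, with r = 1-p and D = p - r^m·(p + (m-1)p² - r^(m+1) - p·r), we have D > 0. -/
/-!
Since `p - p r = p²`, the denominator is `D = p - m p² rᵐ + r²ᵐ⁺¹`. Bernoulli's inequality
gives `rᵐ (1 + m p) ≤ rᵐ (1 + p)ᵐ = (1 - p²)ᵐ ≤ 1`, i.e. `m p² rᵐ ≤ p (1 - rᵐ)`, hence
`D ≥ p rᵐ + r²ᵐ⁺¹ > 0`.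
-/

lemma one_sub_pow_mul_one_add_mul_le_one {p : ℝ} (hp0 : 0 ≤ p) (hp1 : p ≤ 1) (n : ℕ) :
    (1 - p) ^ n * (1 + n * p) ≤ 1 :=
  calc (1 - p) ^ n * (1 + n * p)
      ≤ (1 - p) ^ n * (1 + p) ^ n :=
        mul_le_mul_of_nonneg_left (one_add_mul_le_pow (by linarith) n)
          (pow_nonneg (by linarith) n)
    _ = (1 - p ^ 2) ^ n := by rw [← mul_pow]; ring
    _ ≤ 1 := pow_le_one₀ (by nlinarith) (by nlinarith)

theorem stmt_3_general (p : ℝ) (m : ℕ) (hp : 0 < p) (hp1 : p < 1)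
    (r D : ℝ) (hr : r = 1 - p)
    (hD : D = p - r^m * (p + ((m:ℝ)-1)*p^2 - r^(m+1) - p*r)) :
    0 < D := by
  subst hr hD
  have hr0 : 0 < 1 - p := by linarith
  have hsplit : p - (1 - p) ^ m * (p + ((m:ℝ)-1)*p^2 - (1 - p)^(m+1) - p*(1 - p)) =
      p * (1 - (1 - p) ^ m * (1 + m * p)) + p * (1 - p) ^ m + (1 - p) ^ (2 * m + 1) := by
    ring
  have hbernoulli := one_sub_pow_mul_one_add_mul_le_one hp.le hp1.le m
  rw [hsplit]
  have hslack := mul_nonneg hp.le (sub_nonneg.mpr hbernoulli)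
  have hmid := mul_pos hp (pow_pos hr0 m)
  have htail := pow_pos hr0 (2 * m + 1)
  linarith

theorem stmt_3 (p : ℝ) (m : ℕ) (hm : 1 ≤ m) (hp : 0 < p) (hp1 : p < 1)
    (r D : ℝ) (hr : r = 1 - p)
    (hD : D = p - r^m * (p + ((m:ℝ)-1)*p^2 - r^(m+1) - p*r)) :
    0 < D :=
  stmt_3_general p m hp hp1 r D hr hD
end

section
/- For 0 < p < 1 and integer m ≥ 1, with r = 1-p, the steady-state values π(1) = r^(2m+1)/D, π(m+1) = p·r^(2m)/D, π(e) = p²·r^(3m-e+1)/D (m+2 ≤ e ≤ 2m), π(2m+1) = p·(1-r^m(1+(m-1)p))/D, where D = p - r^m·(p+(m-1)p²-r^(m+1)-p·r), satisfy the balance equation of state 1: π(1)·p = Σ_{i=m+1}^{2m+1} π(i)·(1-p)^i. -/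
/-!
Every middle state `e ∈ [m+2, 2m]` contributes the same flow `p² r^(3m+1) / D` into state 1,
so the right-hand side collapses to three terms plus `m - 1` copies of that one. Cleared of `D`,
the balance equation is then a polynomial identity in `p`, `r` and `r^m`.
-/

open Finset

theorem Finset.sum_Icc_succ_top_eq_bot_add_sum_add_top {M : Type*} [AddCommMonoid M] (f : ℕ → M)
    {a b : ℕ} (hab : a ≤ b) :
    ∑ i ∈ Icc a (b + 1), f i = f a + ∑ i ∈ Icc (a + 1) b, f i + f (b + 1) := by
  rw [sum_Icc_succ_top (by omega), Icc_eq_cons_Ioc hab, sum_cons, Icc_add_one_left_eq_Ioc]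

theorem sum_Icc_const_mul_pow_sub_mul_pow {R : Type*} [CommSemiring R] (c r : R) (a b n : ℕ)
    (hb : b ≤ n) :
    ∑ e ∈ Icc a b, c * r ^ (n - e) * r ^ e = ((b + 1 - a : ℕ) : R) * (c * r ^ n) := by
  rw [sum_congr rfl fun e he => by rw [mul_assoc, pow_sub_mul_pow r ((mem_Icc.1 he).2.trans hb)],
    sum_const, Nat.card_Icc, nsmul_eq_mul]

theorem state_one_balance_identity {K : Type*} [Field K] (p r D : K) (m : ℕ) :
    r ^ (2 * m + 1) / D * p =
      p * r ^ (2 * m) / D * r ^ (m + 1) + ((m : K) - 1) * (p ^ 2 * r ^ (3 * m + 1) / D)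
        + p * (1 - r ^ m * (1 + ((m : K) - 1) * p)) / D * r ^ (2 * m + 1) := by
  ring

theorem stmt_5_general (p : ℝ) (m : ℕ) (hm : 1 ≤ m)
    (r D : ℝ) (hr : r = 1 - p)
    (π : ℕ → ℝ)
    (hπ1 : π 1 = r^(2*m+1)/D)
    (hπm1 : π (m+1) = p*r^(2*m)/D)
    (hπe : ∀ e, m+2 ≤ e → e ≤ 2*m → π e = p^2 * r^(3*m+1-e) / D)
    (hπlast : π (2*m+1) = p*(1 - r^m*(1+((m:ℝ)-1)*p))/D) :
    π 1 * p = ∑ i ∈ Finset.Icc (m+1) (2*m+1), π i * (1-p)^i := by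
  rw [← hr, sum_Icc_succ_top_eq_bot_add_sum_add_top _ (by omega : m + 1 ≤ 2 * m)]
  have hmiddle : ∑ e ∈ Icc (m + 1 + 1) (2 * m), π e * r ^ e
      = ((m : ℝ) - 1) * (p ^ 2 * r ^ (3 * m + 1) / D) := by
    rw [sum_congr rfl fun e he => by
        rw [hπe e (mem_Icc.1 he).1 (mem_Icc.1 he).2, mul_div_right_comm],
      sum_Icc_const_mul_pow_sub_mul_pow _ _ _ _ _ (by omega),
      show 2 * m + 1 - (m + 1 + 1) = m - 1 by omega, Nat.cast_sub hm, Nat.cast_one,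
      mul_div_right_comm]
  rw [hmiddle, hπ1, hπm1, hπlast]
  exact state_one_balance_identity p r D m

theorem stmt_5 (p : ℝ) (m : ℕ) (hm : 1 ≤ m) (hp : 0 < p) (hp1 : p < 1)
    (r D : ℝ) (hr : r = 1 - p)
    (hD : D = p - r^m * (p + ((m:ℝ)-1)*p^2 - r^(m+1) - p*r))
    (π : ℕ → ℝ)
    (hπ1 : π 1 = r^(2*m+1)/D)
    (hπm1 : π (m+1) = p*r^(2*m)/D)
    (hπe : ∀ e, m+2 ≤ e → e ≤ 2*m → π e = p^2 * r^(3*m+1-e) / D)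
    (hπlast : π (2*m+1) = p*(1 - r^m*(1+((m:ℝ)-1)*p))/D) :
    π 1 * p = ∑ i ∈ Finset.Icc (m+1) (2*m+1), π i * (1-p)^i :=
  stmt_5_general p m hm r D hr π hπ1 hπm1 hπe hπlast
end

section
/- For 0 < p < 1 and integer m ≥ 1, with r = 1-p, the expected buffer size S := 1·π(1) + Σ_{e=m+1}^{2m+1} e·π(e), computed from the steady-state distribution π(1)=r^(2m+1)/D, π(m+1)=p·r^(2m)/D, π(e)=p²·r^(3m-e+1)/D for m+2 ≤ e ≤ 2m, π(2m+1)=p·(1-r^m(1+(m-1)p))/D with D = p - r^m·(p+(m-1)p²-r^(m+1)-p·r), equals (r^m·(r·(2r^m - 1) - m·p²·(2m+1)) + (2m+1)·p) / D. -/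
/-!
With `r = 1 - p`, the only non-trivial part of `S` is the arithmetico-geometric sum
`∑_{e=m+2}^{2m} e r^(3m+1-e)`. Multiplied by `p² = (1 - r)²` it telescopes, since
`H e = e r^(c+2-e) - (e-1) r^(c+1-e)` satisfies `H e - H (e+1) = (1 - r)² e r^(c-e)`.
After that the claim is a polynomial identity in `r`, `r^m` and `m` over the common denominator `D`.
-/

open Finset

theorem one_sub_sq_mul_sum_Ico_natCast_mul_pow_sub {R : Type*} [CommRing R] (x : R)
    {a b c : ℕ} (hab : a ≤ b) (hbc : b ≤ c + 1) :
    (1 - x) ^ 2 * ∑ e ∈ Ico a b, (e : R) * x ^ (c - e) =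
      ((a : R) * x ^ (c + 2 - a) - ((a : R) - 1) * x ^ (c + 1 - a)) -
        ((b : R) * x ^ (c + 2 - b) - ((b : R) - 1) * x ^ (c + 1 - b)) := by
  induction b, hab using Nat.le_induction with
  | base => simp
  | succ b hab ih =>
    rw [sum_Ico_succ_top hab, mul_add, ih (by omega),
      show c + 2 - b = c - b + 2 by omega, show c + 1 - b = c - b + 1 by omega,
      show c + 2 - (b + 1) = c - b + 1 by omega, show c + 1 - (b + 1) = c - b by omega]
    push_cast
    ring

theorem stmt_9_general (p : ℝ) (m : ℕ) (hm : 1 ≤ m)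
    (r D : ℝ) (hr : r = 1 - p)
    (π : ℕ → ℝ)
    (hπ1 : π 1 = r^(2*m+1)/D)
    (hπm1 : π (m+1) = p*r^(2*m)/D)
    (hπe : ∀ e, m+2 ≤ e → e ≤ 2*m → π e = p^2 * r^(3*m+1-e) / D)
    (hπlast : π (2*m+1) = p*(1 - r^m*(1+((m:ℝ)-1)*p))/D)
    (S : ℝ)
    (hS : S = 1 * π 1 + ∑ e ∈ Finset.Icc (m+1) (2*m+1), (e:ℝ) * π e) :
    S = (r^m * (r*(2*r^m - 1) - m*p^2*(2*m+1)) + (2*m+1)*p) / D := by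
  subst hr hS
  have hsum : ∑ e ∈ Ico (m + 2) (2 * m + 1), (e : ℝ) * π e =
      (p ^ 2 * ∑ e ∈ Ico (m + 2) (2 * m + 1), (e : ℝ) * (1 - p) ^ (3 * m + 1 - e)) / D := by
    rw [mul_sum, sum_div]
    refine sum_congr rfl fun e he => ?_
    rw [mem_Ico] at he
    rw [hπe e he.1 (by omega)]
    ring
  have htelescope := one_sub_sq_mul_sum_Ico_natCast_mul_pow_sub (1 - p)
    (show m + 2 ≤ 2 * m + 1 by omega) (show 2 * m + 1 ≤ 3 * m + 1 + 1 by omega)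
  rw [sub_sub_cancel, show 3 * m + 1 + 2 - (m + 2) = 2 * m + 1 by omega,
    show 3 * m + 1 + 1 - (m + 2) = 2 * m by omega,
    show 3 * m + 1 + 2 - (2 * m + 1) = m + 2 by omega,
    show 3 * m + 1 + 1 - (2 * m + 1) = m + 1 by omega] at htelescope
  rw [← Ico_add_one_right_eq_Icc, sum_Ico_succ_top (by omega),
    sum_eq_sum_Ico_succ_bot (by omega), hsum, htelescope, hπ1, hπm1, hπlast]
  push_cast
  ring

theorem stmt_9 (p : ℝ) (m : ℕ) (hm : 1 ≤ m) (hp : 0 < p) (hp1 : p < 1)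
    (r D : ℝ) (hr : r = 1 - p)
    (hD : D = p - r^m * (p + ((m:ℝ)-1)*p^2 - r^(m+1) - p*r))
    (π : ℕ → ℝ)
    (hπ1 : π 1 = r^(2*m+1)/D)
    (hπm1 : π (m+1) = p*r^(2*m)/D)
    (hπe : ∀ e, m+2 ≤ e → e ≤ 2*m → π e = p^2 * r^(3*m+1-e) / D)
    (hπlast : π (2*m+1) = p*(1 - r^m*(1+((m:ℝ)-1)*p))/D)
    (S : ℝ)
    (hS : S = 1 * π 1 + ∑ e ∈ Finset.Icc (m+1) (2*m+1), (e:ℝ) * π e) :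
    S = (r^m * (r*(2*r^m - 1) - m*p^2*(2*m+1)) + (2*m+1)*p) / D :=
  stmt_9_general p m hm r D hr π hπ1 hπm1 hπe hπlast S hS
end
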